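/- The polynomial Δ₈ is invariant for the action of the group G₈ = SL₂(L)×Lˣ×Lˣ×Lˣ on V₈: for every γ ∈ G₈ and every v ∈ V₈, Δ₈(γ·v) = Δ₈(v). -/

import Mathlib

/- Zariski-closedness of a subset of affine n-space over L: it is the common zero locus
of a set of polynomial functions (with respect to the fixed coordinates). -/
def IsZariskiClosed {n : ℕ} {L : Type*} [CommRing L] (s : Set (Fin n → L)) : Prop :=
  ∃ P : Set (MvPolynomial (Fin n) L), s = {x | ∀ p ∈ P, MvPolynomial.eval x p = 0}

/- The element (F₁, F₂, f, g) of V₈ = P₂ ⊕ P₁ ⊕ L ⊕ L with coordinates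
c = (a,b,c,d,e,f,g): F₁ = aX² + bXY + cY², F₂ = dX + eY (X = X 0, Y = X 1). -/
noncomputable def toV8 {L : Type*} [CommRing L] (c : Fin 7 → L) :
    MvPolynomial (Fin 2) L × MvPolynomial (Fin 2) L × L × L :=
  (MvPolynomial.C (c 0) * MvPolynomial.X 0 ^ 2
      + MvPolynomial.C (c 1) * MvPolynomial.X 0 * MvPolynomial.X 1
      + MvPolynomial.C (c 2) * MvPolynomial.X 1 ^ 2,
   MvPolynomial.C (c 3) * MvPolynomial.X 0 + MvPolynomial.C (c 4) * MvPolynomial.X 1,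
   c 5, c 6)

/- Linear substitution of the variables (X,Y) by a matrix A ∈ SL₂(L). -/
noncomputable def sub8 {L : Type*} [CommRing L] (A : Matrix.SpecialLinearGroup (Fin 2) L)
    (v : MvPolynomial (Fin 2) L) : MvPolynomial (Fin 2) L :=
  MvPolynomial.aeval (fun i => ∑ j : Fin 2, MvPolynomial.C (A.1 i j) * MvPolynomial.X j) v

/- The action of G₈ = SL₂(L) × Lˣ × Lˣ × Lˣ on V₈:
(A, t₁, t₂, t₃)·(F₁, F₂, f, g) = (t₂⁻¹·(F₁∘A), t₃⁻¹·(F₂∘A), t₁⁻¹·f, t₁²t₂³t₃²·g). -/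
noncomputable def act8 {L : Type*} [Field L]
    (g : Matrix.SpecialLinearGroup (Fin 2) L × Lˣ × Lˣ × Lˣ)
    (v : MvPolynomial (Fin 2) L × MvPolynomial (Fin 2) L × L × L) :
    MvPolynomial (Fin 2) L × MvPolynomial (Fin 2) L × L × L :=
  (((g.2.2.1 : L))⁻¹ • sub8 g.1 v.1,
   ((g.2.2.2 : L))⁻¹ • sub8 g.1 v.2.1,
   ((g.2.1 : L))⁻¹ * v.2.2.1,
   (g.2.1 : L) ^ 2 * (g.2.2.1 : L) ^ 3 * (g.2.2.2 : L) ^ 2 * v.2.2.2)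

/- Δ₈(v) = (f²g(b²−4ac)(cd²−bde+ae²))² = f⁴g²·disc(F₁)·disc(F₁F₂). -/
def Delta8 {L : Type*} [CommRing L] (c : Fin 7 → L) : L :=
  ((c 5) ^ 2 * c 6 * ((c 1) ^ 2 - 4 * c 0 * c 2)
      * (c 2 * (c 3) ^ 2 - c 1 * c 3 * c 4 + c 0 * (c 4) ^ 2)) ^ 2

/- Stability: the orbit of v (in the coordinate space of V₈ with respect to its
monomial basis) is Zariski-closed and the stabilizer of v in G₈ is finite. -/
def Stable8 {L : Type*} [Field L] (c : Fin 7 → L) : Prop :=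
  IsZariskiClosed {c' : Fin 7 → L |
    ∃ g : Matrix.SpecialLinearGroup (Fin 2) L × Lˣ × Lˣ × Lˣ,
      toV8 c' = act8 g (toV8 c)} ∧
  {g : Matrix.SpecialLinearGroup (Fin 2) L × Lˣ × Lˣ × Lˣ |
      act8 g (toV8 c) = toV8 c}.Finite

/-
STATEMENT 16 (Lemma 6.1): Δ₈ is invariant for the action of G₈ = SL₂(L) × Lˣ × Lˣ × Lˣ
on V₈: Δ₈(γ·v) = Δ₈(v) for every γ ∈ G₈ and every v ∈ V₈ (the element of V₈ with
coordinates c' is γ·(element with coordinates c)).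
-/
set_option maxHeartbeats 2000000 in
theorem Delta8_invariant
    {L : Type*} [Field L] [IsAlgClosed L] :
    ∀ (g : Matrix.SpecialLinearGroup (Fin 2) L × Lˣ × Lˣ × Lˣ) (c c' : Fin 7 → L),
      toV8 c' = act8 g (toV8 c) → Delta8 c' = Delta8 c := by
  rintro ⟨A, t1, t2, t3⟩ c c' h
  rw [Prod.ext_iff, Prod.ext_iff, Prod.ext_iff] at h
  simp only [toV8, act8] at h
  have hF1 := h.1
  have hF2 := h.2.1
  have h5 := h.2.2.1
  have h6 := h.2.2.2
  set p := A.1 0 0 with hp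
  set q := A.1 0 1 with hq
  set r := A.1 1 0 with hr
  set s := A.1 1 1 with hs
  have hdet : p * s - q * r = 1 := by
    have := A.2
    rw [Matrix.det_fin_two] at this
    exact this
  have h0 : c' 0 = (t2:L)⁻¹ * (c 0 * p^2 + c 1 * (p*r) + c 2 * r^2) := by
    have e := congrArg (MvPolynomial.eval ![1,0]) hF1
    simp [sub8, Fin.sum_univ_two, MvPolynomial.smul_eval] at e
    linear_combination e
  have h2c : c' 2 = (t2:L)⁻¹ * (c 0 * q^2 + c 1 * (q*s) + c 2 * s^2) := by
    have e := congrArg (MvPolynomial.eval ![0,1]) hF1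
    simp [sub8, Fin.sum_univ_two, MvPolynomial.smul_eval] at e
    linear_combination e
  have h1 : c' 1 = (t2:L)⁻¹ * (2*c 0*p*q + c 1*(p*s + q*r) + 2*c 2*r*s) := by
    have e := congrArg (MvPolynomial.eval ![1,1]) hF1
    simp [sub8, Fin.sum_univ_two, MvPolynomial.smul_eval] at e
    linear_combination e - h0 - h2c
  have h3 : c' 3 = (t3:L)⁻¹ * (c 3 * p + c 4 * r) := by
    have e := congrArg (MvPolynomial.eval ![1,0]) hF2
    simp [sub8, Fin.sum_univ_two, MvPolynomial.smul_eval] at e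
    linear_combination e
  have h4 : c' 4 = (t3:L)⁻¹ * (c 3 * q + c 4 * s) := by
    have e := congrArg (MvPolynomial.eval ![0,1]) hF2
    simp [sub8, Fin.sum_univ_two, MvPolynomial.smul_eval] at e
    linear_combination e
  have hD : c' 1 ^ 2 - 4 * c' 0 * c' 2
      = (t2:L)⁻¹^2 * ((c 1)^2 - 4 * c 0 * c 2) := by
    rw [h0, h1, h2c]
    linear_combination ((t2:L)⁻¹^2 * ((c 1)^2 - 4 * c 0 * c 2) * (p*s - q*r + 1)) * hdet
  have hQ : c' 2 * c' 3 ^ 2 - c' 1 * c' 3 * c' 4 + c' 0 * c' 4 ^ 2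
      = (t2:L)⁻¹ * (t3:L)⁻¹^2
        * (c 2 * (c 3)^2 - c 1 * c 3 * c 4 + c 0 * (c 4)^2) := by
    rw [h0, h1, h2c, h3, h4]
    linear_combination ((t2:L)⁻¹ * (t3:L)⁻¹^2
      * (c 2 * (c 3)^2 - c 1 * c 3 * c 4 + c 0 * (c 4)^2) * (p*s - q*r + 1)) * hdet
  have n1 : (t1:L) ≠ 0 := Units.ne_zero t1
  have n2 : (t2:L) ≠ 0 := Units.ne_zero t2
  have n3 : (t3:L) ≠ 0 := Units.ne_zero t3
  unfold Delta8
  rw [hD, hQ, h5, h6]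
  field_simp
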